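/- Let $0 < \mu < \nu \le 1$ and $\epsilon > 0$ satisfy $(\epsilon+\nu)\mu > \nu$. Let $Q : \mathbb{N} \to \mathbb{R}_{>0}$ be a non-decreasing function with $Q(s) > e^{s^\mu}$ for all large $s$ and $Q(s) < e^{s^\nu}$ for all large $s$. Set $k = k(n) = \lceil n^\nu \rceil$ and $c = c(n) = \lceil n^\epsilon \rceil$. Then for all sufficiently large $n$ there exists $s$ with $n \le s \le n + (k-1)c$ such that $Q(s + c) \ge 3 Q(s)$. -/

import Mathlib

/-!
If no block `[s, s + c]` with `n ≤ s ≤ n + (k-1)c` triples `Q`, then the `k` consecutive blocks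
give `Q(n + kc) < 3^k Q(n) < exp(k log 3 + n^ν)`, while `Q(n + kc) > exp((n + kc)^μ)` and
`(n + kc)^μ ≥ (n^ν n^ε)^μ`. Since `(ε + ν)μ > ν`, the exponent `n^((ε + ν)μ)` eventually beats
`k log 3 + n^ν = O(n^ν)`.
-/

open Filter Real

lemma apply_add_mul_le_pow_mul {f : ℕ → ℝ} {r : ℝ} (hr : 0 ≤ r) (n c : ℕ) :
    ∀ k : ℕ, (∀ j < k, f (n + j * c + c) ≤ r * f (n + j * c)) → f (n + k * c) ≤ r ^ k * f n
  | 0, _ => by simp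
  | k + 1, hstep => by
    have ih := apply_add_mul_le_pow_mul hr n c k fun j hj => hstep j (by omega)
    calc f (n + (k + 1) * c) = f (n + k * c + c) := by rw [add_mul, one_mul, add_assoc]
      _ ≤ r * f (n + k * c) := hstep k (by omega)
      _ ≤ r * (r ^ k * f n) := mul_le_mul_of_nonneg_left ih hr
      _ = r ^ (k + 1) * f n := by ring

lemma exists_mul_le_apply_add_of_pow_mul_lt {f : ℕ → ℝ} {r : ℝ} (hr : 0 ≤ r) {n c k : ℕ}
    (h : r ^ k * f n < f (n + k * c)) :
    ∃ s, n ≤ s ∧ s ≤ n + (k - 1) * c ∧ r * f s ≤ f (s + c) := by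
  by_contra! hsmall
  refine h.not_ge (apply_add_mul_le_pow_mul hr n c k fun j hj => ?_)
  exact (hsmall _ (Nat.le_add_right n _)
    (Nat.add_le_add_left (Nat.mul_le_mul_right c (by omega)) n)).le

lemma eventually_mul_rpow_lt_rpow {a b : ℝ} (hab : a < b) (C : ℝ) :
    ∀ᶠ n : ℕ in atTop, C * (n : ℝ) ^ a < (n : ℝ) ^ b := by
  have hpow : Tendsto (fun n : ℕ => (n : ℝ) ^ (b - a)) atTop atTop :=
    (tendsto_rpow_atTop (sub_pos.2 hab)).comp tendsto_natCast_atTop_atTop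
  filter_upwards [hpow.eventually_gt_atTop C, eventually_gt_atTop 0] with n hC hn
  have hn' : (0 : ℝ) < n := Nat.cast_pos.2 hn
  calc C * (n : ℝ) ^ a < (n : ℝ) ^ (b - a) * (n : ℝ) ^ a :=
        mul_lt_mul_of_pos_right hC (rpow_pos_of_pos hn' a)
    _ = (n : ℝ) ^ b := by rw [← rpow_add hn', sub_add_cancel]

lemma rpow_add_mul_le_natCast_add_ceil_mul_ceil {μ ν ε : ℝ} (hμ : 0 ≤ μ) {n : ℕ} (hn : 0 < n) :
    (n : ℝ) ^ ((ε + ν) * μ) ≤ ((n + ⌈(n : ℝ) ^ ν⌉₊ * ⌈(n : ℝ) ^ ε⌉₊ : ℕ) : ℝ) ^ μ := by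
  have hn' : (0 : ℝ) < n := Nat.cast_pos.2 hn
  have hprod : (n : ℝ) ^ (ε + ν) ≤ ((n + ⌈(n : ℝ) ^ ν⌉₊ * ⌈(n : ℝ) ^ ε⌉₊ : ℕ) : ℝ) := by
    rw [rpow_add hn', mul_comm, Nat.cast_add, Nat.cast_mul]
    calc (n : ℝ) ^ ν * (n : ℝ) ^ ε ≤ ⌈(n : ℝ) ^ ν⌉₊ * ⌈(n : ℝ) ^ ε⌉₊ :=
          mul_le_mul (Nat.le_ceil _) (Nat.le_ceil _) (rpow_nonneg hn'.le _) (Nat.cast_nonneg _)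
      _ ≤ _ := le_add_of_nonneg_left (Nat.cast_nonneg _)
  rw [rpow_mul hn'.le]
  exact rpow_le_rpow (rpow_nonneg hn'.le _) hprod hμ

lemma eventually_ceil_mul_add_rpow_lt {μ ν ε : ℝ} (hμ : 0 < μ) (hν : 0 ≤ ν)
    (hmain : ν < (ε + ν) * μ) (C : ℝ) :
    ∀ᶠ n : ℕ in atTop, (⌈(n : ℝ) ^ ν⌉₊ : ℝ) * C + (n : ℝ) ^ ν <
      ((n + ⌈(n : ℝ) ^ ν⌉₊ * ⌈(n : ℝ) ^ ε⌉₊ : ℕ) : ℝ) ^ μ := by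
  filter_upwards [eventually_mul_rpow_lt_rpow hmain (2 * |C| + 1), eventually_gt_atTop 0]
    with n hdom hn
  have hone : (1 : ℝ) ≤ (n : ℝ) ^ ν := one_le_rpow (Nat.one_le_cast.2 hn) hν
  have hceil : (⌈(n : ℝ) ^ ν⌉₊ : ℝ) ≤ 2 * (n : ℝ) ^ ν := by
    linarith [Nat.ceil_lt_add_one (zero_le_one.trans hone)]
  have hC : (⌈(n : ℝ) ^ ν⌉₊ : ℝ) * C ≤ 2 * (n : ℝ) ^ ν * |C| :=
    (mul_le_mul_of_nonneg_left (le_abs_self C) (Nat.cast_nonneg _)).trans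
      (mul_le_mul_of_nonneg_right hceil (abs_nonneg C))
  calc (⌈(n : ℝ) ^ ν⌉₊ : ℝ) * C + (n : ℝ) ^ ν ≤ (2 * |C| + 1) * (n : ℝ) ^ ν := by linarith
    _ < (n : ℝ) ^ ((ε + ν) * μ) := hdom
    _ ≤ _ := rpow_add_mul_le_natCast_add_ceil_mul_ceil hμ.le hn

theorem stmt_8_general (μ ν ε : ℝ) (hμ : 0 < μ) (hμν : μ < ν)
    (hmain : (ε + ν) * μ > ν)
    (Q : ℕ → ℝ)
    (hlow : ∀ᶠ s : ℕ in atTop, Real.exp ((s : ℝ) ^ μ) < Q s)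
    (hup : ∀ᶠ s : ℕ in atTop, Q s < Real.exp ((s : ℝ) ^ ν)) :
    ∀ᶠ n : ℕ in atTop,
      ∃ s : ℕ, n ≤ s ∧ s ≤ n + (⌈(n : ℝ) ^ ν⌉₊ - 1) * ⌈(n : ℝ) ^ ε⌉₊ ∧
        3 * Q s ≤ Q (s + ⌈(n : ℝ) ^ ε⌉₊) := by
  have hlow' := (tendsto_atTop_mono (fun n => Nat.le_add_right n
    (⌈(n : ℝ) ^ ν⌉₊ * ⌈(n : ℝ) ^ ε⌉₊)) tendsto_id).eventually hlow
  filter_upwards [hup, hlow', eventually_ceil_mul_add_rpow_lt hμ (hμ.trans hμν).le hmain (log 3)]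
    with n hQn hQnkc hgrowth
  refine exists_mul_le_apply_add_of_pow_mul_lt (by norm_num) ?_
  calc (3 : ℝ) ^ ⌈(n : ℝ) ^ ν⌉₊ * Q n < 3 ^ ⌈(n : ℝ) ^ ν⌉₊ * exp ((n : ℝ) ^ ν) :=
        mul_lt_mul_of_pos_left hQn (by positivity)
    _ = exp (⌈(n : ℝ) ^ ν⌉₊ * log 3 + (n : ℝ) ^ ν) := by
        rw [exp_add, exp_nat_mul, exp_log (by norm_num)]
    _ < exp (((n + ⌈(n : ℝ) ^ ν⌉₊ * ⌈(n : ℝ) ^ ε⌉₊ : ℕ) : ℝ) ^ μ) := exp_lt_exp.2 hgrowth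
    _ < _ := hQnkc

/-- Lemma 4.3 of the paper (pigeonhole on growth blocks).
With `k = ⌈n^ν⌉` and `c = ⌈n^ε⌉`, for all large `n` there is
`s ∈ [n, n + (k-1)c]` with `Q(s+c) ≥ 3 Q(s)`. -/
theorem stmt_8 (μ ν ε : ℝ) (hμ : 0 < μ) (hμν : μ < ν) (hν : ν ≤ 1) (hε : 0 < ε)
    (hmain : (ε + ν) * μ > ν)
    (Q : ℕ → ℝ) (hQpos : ∀ s, 0 < Q s) (hQmono : Monotone Q)
    (hlow : ∀ᶠ s : ℕ in atTop, Real.exp ((s : ℝ) ^ μ) < Q s)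
    (hup : ∀ᶠ s : ℕ in atTop, Q s < Real.exp ((s : ℝ) ^ ν)) :
    ∀ᶠ n : ℕ in atTop,
      ∃ s : ℕ, n ≤ s ∧ s ≤ n + (⌈(n : ℝ) ^ ν⌉₊ - 1) * ⌈(n : ℝ) ^ ε⌉₊ ∧
        3 * Q s ≤ Q (s + ⌈(n : ℝ) ^ ε⌉₊) :=
  stmt_8_general μ ν ε hμ hμν hmain Q hlow hup
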